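/- arXiv:2212.11183 — 4 statements merged into one kernel-verified Lean document; each statement's English description precedes it below -/
import Mathlib

section
/- Let X ⊆ ℝⁿ be any subset and let h : X → ℝᵐ be a Lipschitz mapping. Then there exists a Lipschitz mapping H : ℝⁿ → ℝᵐ such that H restricted to X equals h. -/
/-! Transport `h` along a linear isomorphism `ℝᵐ ≃L[ℝ] (ι → ℝ)`, extend each coordinate by the
McShane formula `x ↦ inf_{y ∈ X} (h y + C ‖x - y‖)`, and transport back; both transports are
Lipschitz since linear maps on finite-dimensional spaces are continuous. -/

theorem lipschitz_extension_general {n m : ℕ} (X : Set (EuclideanSpace ℝ (Fin n)))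
    (h : EuclideanSpace ℝ (Fin n) → EuclideanSpace ℝ (Fin m))
    (C : ℝ)
    (hlip : ∀ x ∈ X, ∀ y ∈ X, ‖h x - h y‖ ≤ C * ‖x - y‖) :
    ∃ H : EuclideanSpace ℝ (Fin n) → EuclideanSpace ℝ (Fin m),
      (∃ C' : ℝ, 0 < C' ∧ ∀ x y, ‖H x - H y‖ ≤ C' * ‖x - y‖) ∧
      ∀ x ∈ X, H x = h x := by
  have hlipOn : LipschitzOnWith (Real.toNNReal C) h X :=
    LipschitzOnWith.of_dist_le' (by simpa only [dist_eq_norm] using hlip)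
  obtain ⟨H, hH, hHX⟩ := hlipOn.extend_finite_dimension
  set K := lipschitzExtensionConstant (EuclideanSpace ℝ (Fin m)) * Real.toNNReal C
  refine ⟨H, ⟨K + 1, by positivity, fun x y => ?_⟩, fun x hx => (hHX hx).symm⟩
  calc ‖H x - H y‖ = dist (H x) (H y) := (dist_eq_norm _ _).symm
    _ ≤ K * dist x y := hH.dist_le_mul x y
    _ ≤ (K + 1 : ℝ) * ‖x - y‖ := by
        rw [dist_eq_norm]
        gcongr
        linarith

/-- McShane–Whitney–Kirszbraun: a Lipschitz map defined on a subset `X ⊆ ℝⁿ` with values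
in `ℝᵐ` extends to a Lipschitz map on all of `ℝⁿ`. -/
theorem lipschitz_extension {n m : ℕ} (X : Set (EuclideanSpace ℝ (Fin n)))
    (h : EuclideanSpace ℝ (Fin n) → EuclideanSpace ℝ (Fin m))
    (C : ℝ) (hC : 0 < C)
    (hlip : ∀ x ∈ X, ∀ y ∈ X, ‖h x - h y‖ ≤ C * ‖x - y‖) :
    ∃ H : EuclideanSpace ℝ (Fin n) → EuclideanSpace ℝ (Fin m),
      (∃ C' : ℝ, 0 < C' ∧ ∀ x y, ‖H x - H y‖ ≤ C' * ‖x - y‖) ∧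
      ∀ x ∈ X, H x = h x :=
  lipschitz_extension_general X h C hlip
end

section
/- Let X ⊆ ℝⁿ and Y ⊆ ℝᵐ be subsets and let φ : X → Y be a bi-Lipschitz bijection (there is λ ≥ 1 with (1/λ)·‖x₁−x₂‖ ≤ ‖φ(x₁)−φ(x₂)‖ ≤ λ·‖x₁−x₂‖ for all x₁,x₂ ∈ X). Then there exists a bi-Lipschitz homeomorphism Φ : ℝⁿ × ℝᵐ → ℝⁿ × ℝᵐ (a bijection such that Φ and Φ⁻¹ are Lipschitz) satisfying Φ(x,0) = (0, φ(x)) for every x ∈ X; in particular Φ maps X × {0} onto {0} × Y. -/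
/-!
Extend `φ` and `φ⁻¹` to Lipschitz maps `φ'`, `ψ'` of the ambient spaces (McShane).
The shears `(x, y) ↦ (x, y + φ' x)` and `(x, y) ↦ (x - ψ' y, y)` are bi-Lipschitz bijections
of `ℝⁿ × ℝᵐ` whatever the Lipschitz maps `φ'` and `ψ'` are, and their composite sends `(x, 0)`
to `(x - ψ' (φ x), φ x) = (0, φ x)` for `x ∈ X`.
-/

open scoped NNReal
open Set Function

section Bilipschitz

variable {α β γ : Type*} [PseudoEMetricSpace α] [PseudoEMetricSpace β] [PseudoEMetricSpace γ]

def Equiv.IsBilipschitz (e : α ≃ β) : Prop :=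
  (∃ K, LipschitzWith K e) ∧ ∃ K, LipschitzWith K e.symm

theorem Equiv.IsBilipschitz.trans {e : α ≃ β} {e' : β ≃ γ} (he : e.IsBilipschitz)
    (he' : e'.IsBilipschitz) : (e.trans e').IsBilipschitz := by
  obtain ⟨⟨K₁, h₁⟩, ⟨L₁, k₁⟩⟩ := he
  obtain ⟨⟨K₂, h₂⟩, ⟨L₂, k₂⟩⟩ := he'
  exact ⟨⟨_, h₂.comp h₁⟩, ⟨_, k₁.comp k₂⟩⟩

theorem Equiv.isBilipschitz_prodComm : (Equiv.prodComm α β).IsBilipschitz :=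
  ⟨⟨_, LipschitzWith.prod_snd.prodMk LipschitzWith.prod_fst⟩,
    ⟨_, LipschitzWith.prod_snd.prodMk LipschitzWith.prod_fst⟩⟩

end Bilipschitz

section Gluing

variable {E F : Type*}

def Equiv.prodShearAdd [AddGroup F] (f : E → F) : E × F ≃ E × F where
  toFun p := (p.1, p.2 + f p.1)
  invFun p := (p.1, p.2 - f p.1)
  left_inv _ := by simp
  right_inv _ := by simp

theorem Equiv.isBilipschitz_prodShearAdd [PseudoEMetricSpace E] [SeminormedAddCommGroup F]
    {f : E → F} {K : ℝ≥0} (hf : LipschitzWith K f) : (Equiv.prodShearAdd f).IsBilipschitz := by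
  have hf₁ := hf.comp (LipschitzWith.prod_fst (α := E) (β := F))
  exact ⟨⟨_, LipschitzWith.prod_fst.prodMk (LipschitzWith.prod_snd.add hf₁)⟩,
    ⟨_, LipschitzWith.prod_fst.prodMk (LipschitzWith.prod_snd.sub hf₁)⟩⟩

def gluingEquiv [AddGroup E] [AddGroup F] (f : E → F) (g : F → E) : E × F ≃ E × F :=
  (Equiv.prodShearAdd f).trans <|
    (Equiv.prodComm E F).trans <| (Equiv.prodShearAdd (-g)).trans (Equiv.prodComm F E)

theorem gluingEquiv_apply [AddGroup E] [AddGroup F] (f : E → F) (g : F → E) (p : E × F) :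
    gluingEquiv f g p = (p.1 - g (p.2 + f p.1), p.2 + f p.1) := by
  simp [gluingEquiv, Equiv.prodShearAdd, sub_eq_add_neg]

theorem gluingEquiv_apply_zero [AddGroup E] [AddGroup F] {f : E → F} {g : F → E} {x : E}
    (hx : g (f x) = x) : gluingEquiv f g (x, 0) = (0, f x) := by
  simp [gluingEquiv_apply, hx]

theorem isBilipschitz_gluingEquiv [SeminormedAddCommGroup E] [SeminormedAddCommGroup F]
    {f : E → F} {g : F → E} {K L : ℝ≥0} (hf : LipschitzWith K f) (hg : LipschitzWith L g) :
    (gluingEquiv f g).IsBilipschitz :=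
  (Equiv.isBilipschitz_prodShearAdd hf).trans <| Equiv.isBilipschitz_prodComm.trans <|
    (Equiv.isBilipschitz_prodShearAdd hg.neg).trans Equiv.isBilipschitz_prodComm

end Gluing

theorem Set.BijOn.lipschitzOnWith_invFunOn {α β : Type*} [PseudoMetricSpace α]
    [PseudoMetricSpace β] [Nonempty α] {f : α → β} {s : Set α} {t : Set β} {K : ℝ≥0}
    (h : BijOn f s t) (hf : ∀ x ∈ s, ∀ y ∈ s, dist x y ≤ K * dist (f x) (f y)) :
    LipschitzOnWith K (invFunOn f s) t := by
  refine LipschitzOnWith.of_dist_le_mul fun y₁ hy₁ y₂ hy₂ => ?_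
  have key := hf _ (h.surjOn.mapsTo_invFunOn hy₁) _ (h.surjOn.mapsTo_invFunOn hy₂)
  rwa [h.invOn_invFunOn.2 hy₁, h.invOn_invFunOn.2 hy₂] at key

/-- A bi-Lipschitz bijection `φ : X → Y` between subsets `X ⊆ ℝⁿ` and `Y ⊆ ℝᵐ` extends to a
bi-Lipschitz homeomorphism `Φ` of `ℝⁿ × ℝᵐ` with `Φ(x,0) = (0, φ(x))` for all `x ∈ X`;
in particular `Φ` maps `X × {0}` onto `{0} × Y`. -/
theorem bilipschitz_ambient_extension {n m : ℕ}
    (X : Set (EuclideanSpace ℝ (Fin n))) (Y : Set (EuclideanSpace ℝ (Fin m)))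
    (φ : EuclideanSpace ℝ (Fin n) → EuclideanSpace ℝ (Fin m))
    (hbij : Set.BijOn φ X Y)
    (lam : ℝ) (hlam : 1 ≤ lam)
    (hbl : ∀ x₁ ∈ X, ∀ x₂ ∈ X,
      (1 / lam) * ‖x₁ - x₂‖ ≤ ‖φ x₁ - φ x₂‖ ∧ ‖φ x₁ - φ x₂‖ ≤ lam * ‖x₁ - x₂‖) :
    ∃ Φ Ψ : EuclideanSpace ℝ (Fin n) × EuclideanSpace ℝ (Fin m) →
            EuclideanSpace ℝ (Fin n) × EuclideanSpace ℝ (Fin m),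
      Function.LeftInverse Ψ Φ ∧ Function.RightInverse Ψ Φ ∧
      (∃ K : ℝ≥0, LipschitzWith K Φ) ∧ (∃ K : ℝ≥0, LipschitzWith K Ψ) ∧
      (∀ x ∈ X, Φ (x, 0) = (0, φ x)) ∧
      Φ '' (X ×ˢ ({0} : Set (EuclideanSpace ℝ (Fin m)))) =
        ({0} : Set (EuclideanSpace ℝ (Fin n))) ×ˢ Y := by
  have hlam₀ : 0 < lam := zero_lt_one.trans_le hlam
  have hφ : LipschitzOnWith lam.toNNReal φ X := .of_dist_le_mul fun x₁ h₁ x₂ h₂ => by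
    simpa [dist_eq_norm, hlam₀.le] using (hbl x₁ h₁ x₂ h₂).2
  have hψ : LipschitzOnWith lam.toNNReal (invFunOn φ X) Y :=
    hbij.lipschitzOnWith_invFunOn fun x₁ h₁ x₂ h₂ => by
      simpa [dist_eq_norm, hlam₀.le, inv_mul_le_iff₀ hlam₀] using (hbl x₁ h₁ x₂ h₂).1
  obtain ⟨φ', hφ', hφφ'⟩ := hφ.extend_finite_dimension
  obtain ⟨ψ', hψ', hψψ'⟩ := hψ.extend_finite_dimension
  set Φ := gluingEquiv φ' ψ'
  have hΦX : ∀ x ∈ X, Φ (x, 0) = (0, φ x) := fun x hx => by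
    have hψφ : ψ' (φ' x) = x := by
      rw [← hφφ' hx, ← hψψ' (hbij.mapsTo hx), hbij.invOn_invFunOn.1 hx]
    rw [hφφ' hx, gluingEquiv_apply_zero hψφ]
  obtain ⟨hΦ, hΨ⟩ := isBilipschitz_gluingEquiv hφ' hψ'
  refine ⟨Φ, Φ.symm, Φ.left_inv, Φ.right_inv, hΦ, hΨ, hΦX, ?_⟩
  rw [prod_singleton, image_image, image_congr hΦX, singleton_prod, ← hbij.image_eq,
    image_image]
end

section
/- Let φ : ℝᴺ → ℝᴺ be a bijection with φ(0) = 0 such that for some K ≥ 1, (1/K)·‖x−y‖ ≤ ‖φ(x)−φ(y)‖ ≤ K·‖x−y‖ for all x,y ∈ ℝᴺ. Then there exist a sequence (t_j) of positive real numbers with t_j → 0 and a bijection dφ : ℝᴺ → ℝᴺ with dφ(0) = 0 satisfying (1/K)·‖u−v‖ ≤ ‖dφ(u)−dφ(v)‖ ≤ K·‖u−v‖ for all u,v ∈ ℝᴺ, such that the maps v ↦ φ(t_j·v)/t_j converge to dφ uniformly on every compact subset of ℝᴺ, and the maps v ↦ φ⁻¹(t_j·v)/t_j converge to dφ⁻¹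 uniformly on every compact subset of ℝᴺ. -/
open Filter Function Metric Topology
open scoped NNReal

/-! The rescalings `v ↦ t⁻¹ φ(t v)` and `v ↦ t⁻¹ φ⁻¹(t v)` are again `K`-bi-Lipschitz and fix `0`,
so by Arzelà–Ascoli they all lie in one compact subset of `C(ℝᴺ, ℝᴺ)` and a common subsequence
converges there. The bi-Lipschitz bounds pass to the limit pointwise, and since composition
`C(X, Y) × C(Y, X) → C(X, X)` is continuous for locally compact `Y`, the two limits are mutually
inverse. -/

section BiLipschitz

variable {E F : Type*} [SeminormedAddCommGroup E] [SeminormedAddCommGroup F]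

def IsBiLipschitzWith (K : ℝ) (f : E → F) : Prop :=
  ∀ x y, 1 / K * ‖x - y‖ ≤ ‖f x - f y‖ ∧ ‖f x - f y‖ ≤ K * ‖x - y‖

namespace IsBiLipschitzWith

variable {K : ℝ} {f : E → F}

theorem lipschitzWith (hf : IsBiLipschitzWith K f) : LipschitzWith K.toNNReal f :=
  LipschitzWith.of_dist_le_mul fun x y => by
    rw [dist_eq_norm, dist_eq_norm]
    exact (hf x y).2.trans (mul_le_mul_of_nonneg_right (Real.le_coe_toNNReal K) (norm_nonneg _))

theorem continuous (hf : IsBiLipschitzWith K f) : Continuous f :=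
  hf.lipschitzWith.continuous

theorem of_rightInverse (hK : 0 < K) (hf : IsBiLipschitzWith K f) {g : F → E}
    (hg : RightInverse g f) : IsBiLipschitzWith K g := by
  intro x y
  obtain ⟨hlower, hupper⟩ := hf (g x) (g y)
  rw [hg x, hg y] at hlower hupper
  constructor
  · rwa [one_div, inv_mul_le_iff₀ hK]
  · rwa [one_div, inv_mul_le_iff₀ hK] at hlower

theorem rescale [NormedSpace ℝ E] [NormedSpace ℝ F] (hf : IsBiLipschitzWith K f) {t : ℝ}
    (ht : 0 < t) : IsBiLipschitzWith K (fun v => t⁻¹ • f (t • v)) := by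
  intro u v
  obtain ⟨hlower, hupper⟩ := hf (t • u) (t • v)
  simp only [← smul_sub, norm_smul, Real.norm_of_nonneg ht.le,
    Real.norm_of_nonneg (inv_nonneg.2 ht.le)] at hlower hupper ⊢
  constructor
  · rw [le_inv_mul_iff₀ ht]
    linarith
  · rw [inv_mul_le_iff₀ ht]
    linarith

end IsBiLipschitzWith

theorem leftInverse_rescale [Module ℝ E] [Module ℝ F] {f : E → F} {g : F → E}
    (hgf : LeftInverse g f) {t : ℝ} (ht : t ≠ 0) :
    LeftInverse (fun v => t⁻¹ • g (t • v)) (fun v => t⁻¹ • f (t • v)) := fun v => by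
  simp only [smul_inv_smul₀ ht, hgf (t • v), inv_smul_smul₀ ht]

theorem isClosed_setOf_isBiLipschitzWith (K : ℝ) :
    IsClosed {f : C(E, F) | IsBiLipschitzWith K f} := by
  simp only [IsBiLipschitzWith, Set.ofPred_forall, Set.ofPred_and]
  have hcont : ∀ x y, Continuous fun f : C(E, F) => ‖f x - f y‖ := fun x y =>
    ((continuous_eval_const x).sub (continuous_eval_const y)).norm
  exact isClosed_iInter fun x => isClosed_iInter fun y =>
    (isClosed_le continuous_const (hcont x y)).inter (isClosed_le (hcont x y) continuous_const)

end BiLipschitz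

theorem isCompact_setOf_lipschitzWith_apply_eq {X Y : Type*} [PseudoMetricSpace X]
    [MetricSpace Y] [ProperSpace Y] (c : ℝ≥0) (x₀ : X) (y₀ : Y) :
    IsCompact {f : C(X, Y) | LipschitzWith c f ∧ f x₀ = y₀} := by
  apply ArzelaAscoli.isCompact_of_equicontinuous
  · have himage : ContinuousMap.toFun '' {f : C(X, Y) | LipschitzWith c f ∧ f x₀ = y₀} =
        {f : X → Y | LipschitzWith c f ∧ f x₀ = y₀} := by
      ext f
      constructor
      · rintro ⟨g, hg, rfl⟩
        exact hg
      · rintro hf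
        exact ⟨⟨f, hf.1.continuous⟩, hf, rfl⟩
    have hclosed : IsClosed {f : X → Y | LipschitzWith c f ∧ f x₀ = y₀} :=
      (isClosed_setOfPred_lipschitzWith c).inter
        (isClosed_eq (continuous_apply x₀) continuous_const)
    have hbounded : {f : X → Y | LipschitzWith c f ∧ f x₀ = y₀} ⊆
        Set.univ.pi fun x => closedBall y₀ (c * dist x x₀) := by
      rintro f ⟨hf, hfx₀⟩ x -
      rw [mem_closedBall, ← hfx₀]
      exact hf.dist_le_mul x x₀
    rw [himage]
    exact (isCompact_univ_pi fun x => isCompact_closedBall _ _).of_isClosed_subset hclosed hbounded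
  · exact (LipschitzWith.uniformEquicontinuous _ c fun f => f.2.1).equicontinuous

theorem isCompact_setOf_isBiLipschitzWith_apply_zero {E F : Type*} [SeminormedAddCommGroup E]
    [NormedAddCommGroup F] [ProperSpace F] (K : ℝ) :
    IsCompact {f : C(E, F) | IsBiLipschitzWith K f ∧ f 0 = 0} :=
  (isCompact_setOf_lipschitzWith_apply_eq K.toNNReal 0 0).of_isClosed_subset
    ((isClosed_setOf_isBiLipschitzWith K).inter
      (isClosed_eq (continuous_eval_const 0) continuous_const))
    fun _ hf => ⟨hf.1.lipschitzWith, hf.2⟩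

namespace ContinuousMap

noncomputable def rescale {E F : Type*} [SeminormedAddCommGroup E] [NormedSpace ℝ E]
    [SeminormedAddCommGroup F] [NormedSpace ℝ F] (t : ℝ) (f : C(E, F)) : C(E, F) where
  toFun v := t⁻¹ • f (t • v)

theorem leftInverse_of_tendsto {ι X Y : Type*} [TopologicalSpace X] [T2Space X]
    [TopologicalSpace Y] [LocallyCompactSpace Y] {l : Filter ι} [l.NeBot]
    {f : ι → C(X, Y)} {g : ι → C(Y, X)} {f' : C(X, Y)} {g' : C(Y, X)}
    (hgf : ∀ i, LeftInverse (g i) (f i)) (hf : Tendsto f l (𝓝 f'))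
    (hg : Tendsto g l (𝓝 g')) :
    LeftInverse g' f' := fun x => by
  have hcomp : Tendsto (fun i => (g i).comp (f i) x) l (𝓝 (g'.comp f' x)) :=
    ((continuous_eval_const x).tendsto _).comp
      ((continuous_comp'.tendsto (f', g')).comp (hf.prodMk_nhds hg))
  exact tendsto_nhds_unique (hcomp.congr fun i => hgf i x) tendsto_const_nhds

end ContinuousMap

/-- Existence of a blow-up limit (tangent map) at the origin of a global bi-Lipschitz
homeomorphism of `ℝᴺ` fixing the origin, obtained as a uniform-on-compacts limit of the
rescalings `v ↦ φ(t_j v)/t_j` along a sequence `t_j → 0⁺`, with the same bi-Lipschitz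
constants; the rescalings of the inverse converge to the inverse of the limit. -/
theorem blowup_limit_exists {N : ℕ}
    (φ : EuclideanSpace ℝ (Fin N) → EuclideanSpace ℝ (Fin N))
    (hbij : Function.Bijective φ) (h0 : φ 0 = 0) (K : ℝ) (hK : 1 ≤ K)
    (hbl : ∀ x y, (1 / K) * ‖x - y‖ ≤ ‖φ x - φ y‖ ∧ ‖φ x - φ y‖ ≤ K * ‖x - y‖) :
    ∃ t : ℕ → ℝ, (∀ j, 0 < t j) ∧ Tendsto t atTop (nhds 0) ∧
      ∃ dφ : EuclideanSpace ℝ (Fin N) → EuclideanSpace ℝ (Fin N),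
        Function.Bijective dφ ∧ dφ 0 = 0 ∧
        (∀ u v, (1 / K) * ‖u - v‖ ≤ ‖dφ u - dφ v‖ ∧ ‖dφ u - dφ v‖ ≤ K * ‖u - v‖) ∧
        (∀ F : Set (EuclideanSpace ℝ (Fin N)), IsCompact F →
          TendstoUniformlyOn (fun j v => (t j)⁻¹ • φ (t j • v)) dφ atTop F) ∧
        (∀ F : Set (EuclideanSpace ℝ (Fin N)), IsCompact F →
          TendstoUniformlyOn (fun j v => (t j)⁻¹ • (Function.invFun φ) (t j • v))
            (Function.invFun dφ) atTop F) := by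
  have hφ : IsBiLipschitzWith K φ := hbl
  have hψ : IsBiLipschitzWith K (invFun φ) :=
    hφ.of_rightInverse (by linarith) (rightInverse_invFun hbij.2)
  let Φ : C(EuclideanSpace ℝ (Fin N), EuclideanSpace ℝ (Fin N)) := ⟨φ, hφ.continuous⟩
  let Ψ : C(EuclideanSpace ℝ (Fin N), EuclideanSpace ℝ (Fin N)) :=
    ⟨invFun φ, hψ.continuous⟩
  let t : ℕ → ℝ := fun n => 1 / ((n : ℝ) + 1)
  have ht : ∀ n, 0 < t n := fun n => by positivity
  set S := {f : C(EuclideanSpace ℝ (Fin N), EuclideanSpace ℝ (Fin N)) |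
    IsBiLipschitzWith K f ∧ f 0 = 0}
  have hψ0 : invFun φ 0 = 0 :=
    (congrArg (invFun φ) h0).symm.trans (leftInverse_invFun hbij.1 0)
  have hmem : ∀ n, (Φ.rescale (t n), Ψ.rescale (t n)) ∈ S ×ˢ S := fun n =>
    ⟨⟨hφ.rescale (ht n), by simp [ContinuousMap.rescale, Φ, h0]⟩,
      ⟨hψ.rescale (ht n), by simp [ContinuousMap.rescale, Ψ, hψ0]⟩⟩
  obtain ⟨⟨d, e⟩, ⟨hd, -⟩, σ, hσ, hlim⟩ :=
    ((isCompact_setOf_isBiLipschitzWith_apply_zero K).prod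
      (isCompact_setOf_isBiLipschitzWith_apply_zero K)).isSeqCompact hmem
  have hdlim := (continuous_fst.tendsto _).comp hlim
  have helim := (continuous_snd.tendsto _).comp hlim
  have hed : LeftInverse e d := ContinuousMap.leftInverse_of_tendsto
    (fun n => leftInverse_rescale (leftInverse_invFun hbij.1) (ht (σ n)).ne') hdlim helim
  have hde : RightInverse e d := ContinuousMap.leftInverse_of_tendsto
    (fun n => leftInverse_rescale (rightInverse_invFun hbij.2) (ht (σ n)).ne') helim hdlim
  rw [ContinuousMap.tendsto_iff_forall_isCompact_tendstoUniformlyOn] at hdlim helim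
  refine ⟨t ∘ σ, fun j => ht (σ j),
    tendsto_one_div_add_atTop_nhds_zero_nat.comp hσ.tendsto_atTop, d,
    ⟨hed.injective, hde.surjective⟩, hd.2, hd.1, hdlim, ?_⟩
  rw [invFun_eq_of_injective_of_rightInverse hed.injective hde]
  exact helim
end

section
/- Let X ⊆ ℝⁿ and Y ⊆ ℝᵐ be closed sets and let φ : X → Y be a homeomorphism (a continuous bijection with continuous inverse, with respect to the subspace topologies). Then there exists a homeomorphism Φ : ℝⁿ × ℝᵐ → ℝⁿ × ℝᵐ such that Φ(x,0) = (0, φ(x)) for every x ∈ X; in particular Φ maps X × {0} onto {0} × Y. -/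
/-- A homeomorphism `φ : X → Y` between closed subsets `X ⊆ ℝⁿ` and `Y ⊆ ℝᵐ` extends to a
homeomorphism `Φ` of `ℝⁿ × ℝᵐ` with `Φ(x,0) = (0, φ(x))` for all `x ∈ X`; in particular
`Φ` maps `X × {0}` onto `{0} × Y`. -/
theorem homeomorph_ambient_extension {n m : ℕ}
    (X : Set (EuclideanSpace ℝ (Fin n))) (Y : Set (EuclideanSpace ℝ (Fin m)))
    (hX : IsClosed X) (hY : IsClosed Y)
    (φ : EuclideanSpace ℝ (Fin n) → EuclideanSpace ℝ (Fin m))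
    (ψ : EuclideanSpace ℝ (Fin m) → EuclideanSpace ℝ (Fin n))
    (hbij : Set.BijOn φ X Y)
    (hφcont : ContinuousOn φ X) (hψcont : ContinuousOn ψ Y)
    (hinv : ∀ x ∈ X, ψ (φ x) = x) (hinv' : ∀ y ∈ Y, φ (ψ y) = y) :
    ∃ Φ : (EuclideanSpace ℝ (Fin n) × EuclideanSpace ℝ (Fin m)) ≃ₜ
          (EuclideanSpace ℝ (Fin n) × EuclideanSpace ℝ (Fin m)),
      (∀ x ∈ X, Φ (x, 0) = (0, φ x)) ∧
      Φ '' (X ×ˢ ({0} : Set (EuclideanSpace ℝ (Fin m)))) =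
        ({0} : Set (EuclideanSpace ℝ (Fin n))) ×ˢ Y := by
  -- Tietze extensions
  obtain ⟨f, hf⟩ := (ContinuousMap.mk _ hφcont.restrict).exists_restrict_eq hX
  obtain ⟨g, hg⟩ := (ContinuousMap.mk _ hψcont.restrict).exists_restrict_eq hY
  have hfX : ∀ x ∈ X, f x = φ x := by
    intro x hx
    have := congrFun (congrArg DFunLike.coe hf) ⟨x, hx⟩
    simpa using this
  have hgY : ∀ y ∈ Y, g y = ψ y := by
    intro y hy
    have := congrFun (congrArg DFunLike.coe hg) ⟨y, hy⟩
    simpa using this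
  -- shear homeomorphisms
  let e1 : (EuclideanSpace ℝ (Fin n) × EuclideanSpace ℝ (Fin m)) ≃ₜ
      (EuclideanSpace ℝ (Fin n) × EuclideanSpace ℝ (Fin m)) :=
    { toFun := fun p => (p.1, p.2 + f p.1)
      invFun := fun p => (p.1, p.2 - f p.1)
      left_inv := fun p => by simp
      right_inv := fun p => by simp
      continuous_toFun := by
        exact continuous_fst.prodMk (continuous_snd.add (f.continuous.comp continuous_fst))
      continuous_invFun := by
        exact continuous_fst.prodMk (continuous_snd.sub (f.continuous.comp continuous_fst)) }
  let e2 : (EuclideanSpace ℝ (Fin n) × EuclideanSpace ℝ (Fin m)) ≃ₜ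
      (EuclideanSpace ℝ (Fin n) × EuclideanSpace ℝ (Fin m)) :=
    { toFun := fun p => (p.1 - g p.2, p.2)
      invFun := fun p => (p.1 + g p.2, p.2)
      left_inv := fun p => by simp
      right_inv := fun p => by simp
      continuous_toFun := by
        exact (continuous_fst.sub (g.continuous.comp continuous_snd)).prodMk continuous_snd
      continuous_invFun := by
        exact (continuous_fst.add (g.continuous.comp continuous_snd)).prodMk continuous_snd }
  have key : ∀ x ∈ X, (e1.trans e2) (x, 0) = (0, φ x) := by
    intro x hx
    show (x - g (0 + f x), 0 + f x) = (0, φ x)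
    rw [zero_add, hfX x hx, hgY _ (hbij.mapsTo hx), hinv x hx]
    simp
  refine ⟨e1.trans e2, key, ?_⟩
  ext ⟨a, b⟩
  simp only [Set.mem_image, Set.mem_prod, Set.mem_singleton_iff, Prod.exists]
  constructor
  · rintro ⟨x, y, ⟨hx, rfl⟩, hΦ⟩
    rw [key x hx] at hΦ
    obtain ⟨h1, h2⟩ := Prod.mk.injEq .. ▸ hΦ
    exact ⟨h1.symm, h2 ▸ hbij.mapsTo hx⟩
  · rintro ⟨rfl, hb⟩
    obtain ⟨x, hx, rfl⟩ := hbij.surjOn hb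
    exact ⟨x, 0, ⟨hx, rfl⟩, key x hx⟩
end
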